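/- (Symmetry of the conditioned first minimum integrals, part of Theorem 4.5.) Let n ≥ 1, let Ω ⊆ ℂⁿ be a nonempty bounded open set, let w : ℂⁿ → [0,∞) be a measurable weight that is admissible on Ω with ∫_Ω w dλ < ∞, let p ∈ Ω, and let X, Y ∈ ℂⁿ be linearly independent over ℂ. Then the four minimum integrals I¹_{Ω,w}(p;X), I¹_{Ω,w}(p;Y), I¹_{Ω,w}(p;X|Y), I¹_{Ω,w}(p;Y|X) are finite and positive, and I¹_{Ω,w}(p;X) · I¹_{Ω,w}(p;Y|X) = I¹_{Ω,w}(p;Y) · I¹_{Ω,w}(p;X|Y). -/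

import Mathlib

open MeasureTheory Complex
open scoped ENNReal NNReal

noncomputable section

/-- `ℂⁿ` as Euclidean space. -/
abbrev Cn (n : ℕ) := EuclideanSpace ℂ (Fin n)

instance (n : ℕ) : MeasurableSpace (Cn n) :=
  MeasurableSpace.comap (fun x : Cn n => WithLp.ofLp x) (inferInstance : MeasurableSpace (Fin n → ℂ))

instance (n : ℕ) : MeasureSpace (Cn n) :=
  ⟨Measure.map (fun x : Fin n → ℂ => (WithLp.toLp 2 x : Cn n)) (volume : Measure (Fin n → ℂ))⟩

/-- The squared weighted `L²` norm `‖u‖²_{Ω,w} = ∫_Ω |u|² w dλ`, valued in `[0,∞]`. -/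
def wNormSq (n : ℕ) (Ω : Set (Cn n)) (w : Cn n → ℝ) (u : Cn n → ℂ) : ℝ≥0∞ :=
  ∫⁻ z in Ω, ENNReal.ofReal (‖u z‖ ^ 2 * w z)

/-- A competitor: holomorphic on `Ω` with finite weighted squared norm. -/
def IsCompetitor (n : ℕ) (Ω : Set (Cn n)) (w : Cn n → ℝ) (u : Cn n → ℂ) : Prop :=
  DifferentiableOn ℂ u Ω ∧ wNormSq n Ω w u < ⊤

/-- Minimum integral `I⁰_{Ω,w}(p)`. -/
def I0 (n : ℕ) (Ω : Set (Cn n)) (w : Cn n → ℝ) (p : Cn n) : ℝ≥0∞ :=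
  sInf {t | ∃ u, IsCompetitor n Ω w u ∧ u p = 1 ∧ t = wNormSq n Ω w u}

/-- Minimum integral `I¹_{Ω,w}(p;X)`. -/
def I1 (n : ℕ) (Ω : Set (Cn n)) (w : Cn n → ℝ) (p : Cn n) (X : Cn n) : ℝ≥0∞ :=
  sInf {t | ∃ u, IsCompetitor n Ω w u ∧ u p = 0 ∧ fderiv ℂ u p X = 1 ∧
    t = wNormSq n Ω w u}

/-- Minimum integral `I¹_{Ω,w}(p;X|Y)`. -/
def I1cond (n : ℕ) (Ω : Set (Cn n)) (w : Cn n → ℝ) (p : Cn n) (X Y : Cn n) : ℝ≥0∞ :=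
  sInf {t | ∃ u, IsCompetitor n Ω w u ∧ u p = 0 ∧ fderiv ℂ u p Y = 0 ∧
    fderiv ℂ u p X = 1 ∧ t = wNormSq n Ω w u}

/-- Minimum integral `I¹_{Ω,w}(p;∂_k|_{<k})`. -/
def I1flag (n : ℕ) (Ω : Set (Cn n)) (w : Cn n → ℝ) (p : Cn n) (k : Fin n) : ℝ≥0∞ :=
  sInf {t | ∃ u, IsCompetitor n Ω w u ∧ u p = 0 ∧
    (∀ j : Fin n, j < k → fderiv ℂ u p (EuclideanSpace.single j (1 : ℂ)) = 0) ∧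
    fderiv ℂ u p (EuclideanSpace.single k (1 : ℂ)) = 1 ∧ t = wNormSq n Ω w u}

/-- Minimum integral `I²_{Ω,w}(p;X,Y)`. -/
def I2 (n : ℕ) (Ω : Set (Cn n)) (w : Cn n → ℝ) (p : Cn n) (X Y : Cn n) : ℝ≥0∞ :=
  sInf {t | ∃ u, IsCompetitor n Ω w u ∧ u p = 0 ∧ fderiv ℂ u p = 0 ∧
    fderiv ℂ (fun z => fderiv ℂ u z Y) p X = 1 ∧ t = wNormSq n Ω w u}

/-- Admissibility of a weight on `Ω`: a Cauchy-type estimate on compact subsets. -/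
def Admissible (n : ℕ) (Ω : Set (Cn n)) (w : Cn n → ℝ) : Prop :=
  ∀ A : Set (Cn n), IsCompact A → A ⊆ Ω →
    ∃ C > (0 : ℝ), ∀ u, IsCompetitor n Ω w u → ∀ z ∈ A,
      ‖u z‖ ≤ C * Real.sqrt ((wNormSq n Ω w u).toReal)

/-- The Hermitian inner product `⟨X,Y⟩ = Σ_j X_j conj(Y_j)`. -/
def herm (n : ℕ) (X Y : Cn n) : ℂ := ∑ j, X j * (starRingEnd ℂ) (Y j)

/-- The Kähler–Einstein weight of the ball of radius `r`. -/
def keWeight (n m : ℕ) (r : ℝ) (z : Cn n) : ℝ :=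
  if ‖z‖ < r then
    ((n + 1 : ℝ) / r ^ 2) ^ (-(((m : ℤ) - 1) * (n : ℤ))) *
      ((r ^ 2 - ‖z‖ ^ 2) / r ^ 2) ^ ((m - 1) * (n + 1))
  else 0

/-- The constant `C_m`. -/
def Cm (n m : ℕ) : ℝ :=
  Real.pi ^ n / (n + 1 : ℝ) ^ ((m - 1) * n) *
    (Nat.factorial ((m - 1) * (n + 1)) : ℝ) / (Nat.factorial (m * (n + 1) - 1) : ℝ)

end

namespace I1aux
open Filter
open scoped Topology
noncomputable section


variable {E : Type*} [NormedAddCommGroup E] [InnerProductSpace ℂ E]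

local notation "⟪" x ", " y "⟫" => @inner ℂ _ _ x y

lemma inner_self_c (x : E) : ⟪x, x⟫ = ((‖x‖ ^ 2 : ℝ) : ℂ) := by
  rw [inner_self_eq_norm_sq_to_K]; norm_cast

lemma conj_mul_self_c (k : ℂ) : (starRingEnd ℂ) k * k = ((‖k‖ ^ 2 : ℝ) : ℂ) := by
  rw [mul_comm, Complex.mul_conj]
  norm_cast
  rw [Complex.sq_norm]

lemma gen_sInf (𝒜 : Set E) (g : E) (hg : g ≠ 0)
    (hlow : ∀ s ∈ 𝒜, ⟪g, s⟫ = ((‖g‖ ^ 2 : ℝ) : ℂ))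
    (x : ℕ → E) (hx : ∀ᶠ n in atTop, x n ∈ 𝒜) (hxt : Tendsto x atTop (𝓝 g)) :
    sInf {t : ℝ≥0∞ | ∃ s ∈ 𝒜, t = ENNReal.ofReal (‖s‖ ^ 2)} = ENNReal.ofReal (‖g‖ ^ 2) := by
  apply le_antisymm
  · have h1 : Tendsto (fun n => ENNReal.ofReal (‖x n‖ ^ 2)) atTop (𝓝 (ENNReal.ofReal (‖g‖ ^ 2))) :=
      (ENNReal.continuous_ofReal.tendsto _).comp (((continuous_norm.tendsto _).comp hxt).pow 2)
    have h2 : ∀ᶠ n in atTop,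
        sInf {t : ℝ≥0∞ | ∃ s ∈ 𝒜, t = ENNReal.ofReal (‖s‖ ^ 2)} ≤ ENNReal.ofReal (‖x n‖ ^ 2) := by
      filter_upwards [hx] with n hn
      exact sInf_le ⟨x n, hn, rfl⟩
    exact ge_of_tendsto h1 h2
  · refine le_sInf ?_
    rintro t ⟨s, hs, rfl⟩
    have h1 : ‖g‖ ^ 2 ≤ ‖g‖ * ‖s‖ := by
      have h := norm_inner_le_norm (𝕜 := ℂ) g s
      rwa [hlow s hs, Complex.norm_real, Real.norm_eq_abs,
        _root_.abs_of_nonneg (by positivity)] at h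
    have hgpos : (0 : ℝ) < ‖g‖ := norm_pos_iff.2 hg
    exact ENNReal.ofReal_le_ofReal (by nlinarith)

lemma hilb1 (S : Submodule ℂ E) {α : E} (hα : α ∈ S.topologicalClosure)
    {e : E} (he : e ∈ S) (hae : ⟪α, e⟫ = 1) :
    sInf {t : ℝ≥0∞ | ∃ s ∈ S, ⟪α, s⟫ = 1 ∧ t = ENNReal.ofReal (‖s‖ ^ 2)}
      = ENNReal.ofReal (1 / ‖α‖ ^ 2) := by
  have hα0 : α ≠ 0 := by
    intro h; rw [h] at hae; simp at hae
  have hn0 : (0:ℝ) < ‖α‖ ^ 2 := by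
    have := norm_pos_iff.2 hα0; positivity
  set g : E := ((‖α‖ ^ 2 : ℝ) : ℂ)⁻¹ • α with hgdef
  have hcast : ((‖α‖ ^ 2 : ℝ) : ℂ) ≠ 0 := by exact_mod_cast hn0.ne'
  have hg0 : g ≠ 0 := smul_ne_zero (inv_ne_zero hcast) hα0
  have hgnorm : ‖g‖ ^ 2 = 1 / ‖α‖ ^ 2 := by
    rw [hgdef, norm_smul, norm_inv, Complex.norm_real, Real.norm_eq_abs,
      _root_.abs_of_nonneg hn0.le]
    field_simp
  have hinner : ∀ s : E, ⟪g, s⟫ = ((‖α‖^2:ℝ):ℂ)⁻¹ * ⟪α, s⟫ := by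
    intro s
    rw [hgdef, inner_smul_left, map_inv₀, Complex.conj_ofReal]
  obtain ⟨y, hy, hyt⟩ := mem_closure_iff_seq_limit.1 hα
  set c : ℕ → ℂ := fun n => ⟪α, y n⟫ with hc
  have hct : Tendsto c atTop (𝓝 ((‖α‖^2:ℝ):ℂ)) := by
    have h : Tendsto (fun n => ⟪α, y n⟫) atTop (𝓝 ⟪α, α⟫) :=
      ((Continuous.inner continuous_const continuous_id).tendsto α).comp hyt
    rw [inner_self_eq_norm_sq_to_K] at h
    simpa [Complex.ofReal_pow] using h
  have hcne : ∀ᶠ n in atTop, c n ≠ 0 := hct.eventually_ne hcast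
  set x : ℕ → E := fun n => (c n)⁻¹ • y n with hx
  have hxt : Tendsto x atTop (𝓝 g) := by
    rw [hgdef]; exact Tendsto.smul (hct.inv₀ hcast) hyt
  have hset : {t : ℝ≥0∞ | ∃ s ∈ S, ⟪α, s⟫ = 1 ∧ t = ENNReal.ofReal (‖s‖ ^ 2)}
      = {t : ℝ≥0∞ | ∃ s ∈ {s | s ∈ S ∧ ⟪α, s⟫ = 1}, t = ENNReal.ofReal (‖s‖ ^ 2)} := by
    ext t; simp only [Set.mem_setOf_eq]; tauto
  rw [hset, gen_sInf {s | s ∈ S ∧ ⟪α, s⟫ = 1} g hg0 ?_ x ?_ hxt, hgnorm]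
  · rintro s ⟨-, hs1⟩
    rw [hinner, hs1, mul_one, hgnorm, Complex.ofReal_div]
    simp
  · filter_upwards [hcne] with n hn
    refine ⟨S.smul_mem _ (hy n), ?_⟩
    show ⟪α, (c n)⁻¹ • y n⟫ = 1
    rw [inner_smul_right]
    exact inv_mul_cancel₀ hn


set_option maxHeartbeats 1000000 in
lemma hilb2 (S : Submodule ℂ E) {α β : E}
    (hα : α ∈ S.topologicalClosure) (hβ : β ∈ S.topologicalClosure)
    {e f : E} (he : e ∈ S) (hf : f ∈ S)
    (hae : ⟪α, e⟫ = 1) (hbe : ⟪β, e⟫ = 0) (haf : ⟪α, f⟫ = 0) (hbf : ⟪β, f⟫ = 1) :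
    0 < ‖α‖ ^ 2 * ‖β‖ ^ 2 - ‖⟪α, β⟫‖ ^ 2 ∧
    sInf {t : ℝ≥0∞ | ∃ s ∈ S, ⟪β, s⟫ = 0 ∧ ⟪α, s⟫ = 1 ∧ t = ENNReal.ofReal (‖s‖ ^ 2)}
      = ENNReal.ofReal (‖β‖ ^ 2 / (‖α‖ ^ 2 * ‖β‖ ^ 2 - ‖⟪α, β⟫‖ ^ 2)) := by
  have hβ0 : β ≠ 0 := by intro h; rw [h] at hbf; simp at hbf
  have hbne : ‖β‖ ≠ 0 := norm_ne_zero_iff.2 hβ0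
  have hb2 : (0:ℝ) < ‖β‖ ^ 2 := by have := norm_pos_iff.2 hβ0; positivity
  have hbcast : ((‖β‖ ^ 2 : ℝ) : ℂ) ≠ 0 := by exact_mod_cast hb2.ne'
  set c : ℂ := ⟪β, α⟫ / ((‖β‖ ^ 2 : ℝ) : ℂ) with hcdef
  set γ : E := α - c • β with hγdef
  have hβγ : ⟪β, γ⟫ = 0 := by
    rw [hγdef, inner_sub_right, inner_smul_right, hcdef, inner_self_c,
      div_mul_cancel₀ _ hbcast, sub_self]
  have hγs : ∀ s : E, ⟪γ, s⟫ = ⟪α, s⟫ - (starRingEnd ℂ) c * ⟪β, s⟫ := by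
    intro s; rw [hγdef, inner_sub_left, inner_smul_left]
  have hγe : ⟪γ, e⟫ = 1 := by rw [hγs, hae, hbe, mul_zero, sub_zero]
  have hγ0 : γ ≠ 0 := by intro h; rw [h] at hγe; simp at hγe
  have hg2 : (0:ℝ) < ‖γ‖ ^ 2 := by have := norm_pos_iff.2 hγ0; positivity
  have hγcast : ((‖γ‖ ^ 2 : ℝ) : ℂ) ≠ 0 := by exact_mod_cast hg2.ne'
  have hαγ : ⟪α, γ⟫ = ((‖γ‖ ^ 2 : ℝ) : ℂ) := by
    have hαd : α = γ + c • β := by rw [hγdef]; abel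
    calc ⟪α, γ⟫ = ⟪γ, γ⟫ + (starRingEnd ℂ) c * ⟪β, γ⟫ := by
          conv_lhs => rw [hαd, inner_add_left, inner_smul_left]
      _ = ((‖γ‖ ^ 2 : ℝ) : ℂ) := by
          rw [hβγ, mul_zero, add_zero, inner_self_c]
  have hre : ⟪α, c • β⟫ = ((‖⟪α, β⟫‖ ^ 2 / ‖β‖ ^ 2 : ℝ) : ℂ) := by
    rw [inner_smul_right, hcdef, ← inner_conj_symm β α, div_mul_eq_mul_div,
      conj_mul_self_c, Complex.ofReal_div]
  have hnormc : ‖c‖ = ‖⟪α, β⟫‖ / ‖β‖ ^ 2 := by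
    rw [hcdef, norm_div, ← inner_conj_symm β α, RCLike.norm_conj, Complex.norm_real,
      Real.norm_eq_abs, _root_.abs_of_nonneg hb2.le]
  have hnc : ‖c • β‖ ^ 2 = ‖⟪α, β⟫‖ ^ 2 / ‖β‖ ^ 2 := by
    rw [norm_smul, hnormc, mul_pow, div_pow]
    field_simp
  have hnormγ : ‖γ‖ ^ 2 = ‖α‖ ^ 2 - ‖⟪α, β⟫‖ ^ 2 / ‖β‖ ^ 2 := by
    have hns := norm_sub_sq (𝕜 := ℂ) α (c • β)
    rw [hre] at hns
    have hq : ∀ q : ℝ, RCLike.re ((q : ℝ) : ℂ) = q := fun q => by simp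
    rw [hγdef, hns, hnc, hq]
    ring
  have hGpos : (0:ℝ) < ‖α‖ ^ 2 * ‖β‖ ^ 2 - ‖⟪α, β⟫‖ ^ 2 := by
    have h1 : ‖γ‖ ^ 2 * ‖β‖ ^ 2 = ‖α‖ ^ 2 * ‖β‖ ^ 2 - ‖⟪α, β⟫‖ ^ 2 := by
      rw [hnormγ]; field_simp
    rw [← h1]; positivity
  refine ⟨hGpos, ?_⟩
  set g : E := ((‖γ‖ ^ 2 : ℝ) : ℂ)⁻¹ • γ with hgdef
  have hg0 : g ≠ 0 := smul_ne_zero (inv_ne_zero hγcast) hγ0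
  have hgnorm : ‖g‖ ^ 2 = 1 / ‖γ‖ ^ 2 := by
    rw [hgdef, norm_smul, norm_inv, Complex.norm_real, Real.norm_eq_abs,
      _root_.abs_of_nonneg hg2.le]
    field_simp
  have hγcl : γ ∈ S.topologicalClosure :=
    Submodule.sub_mem _ hα (Submodule.smul_mem _ _ hβ)
  obtain ⟨y, hy, hyt⟩ := mem_closure_iff_seq_limit.1 hγcl
  set z : ℕ → E := fun n => y n - ⟪β, y n⟫ • f with hzdef
  have hβy : Tendsto (fun n => ⟪β, y n⟫) atTop (𝓝 (0:ℂ)) := by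
    have h : Tendsto (fun n => ⟪β, y n⟫) atTop (𝓝 ⟪β, γ⟫) :=
      ((Continuous.inner continuous_const continuous_id).tendsto γ).comp hyt
    rwa [hβγ] at h
  have hzt : Tendsto z atTop (𝓝 γ) := by
    have h1 := Tendsto.smul hβy (tendsto_const_nhds (x := f))
    have h2 := Tendsto.sub hyt h1
    simpa using h2
  have hβz : ∀ n, ⟪β, z n⟫ = 0 := by
    intro n
    show ⟪β, y n - ⟪β, y n⟫ • f⟫ = 0
    rw [inner_sub_right, inner_smul_right, hbf, mul_one, sub_self]
  have hαz : ∀ n, ⟪α, z n⟫ = ⟪α, y n⟫ := by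
    intro n
    show ⟪α, y n - ⟪β, y n⟫ • f⟫ = ⟪α, y n⟫
    rw [inner_sub_right, inner_smul_right, haf, mul_zero, sub_zero]
  set d : ℕ → ℂ := fun n => ⟪α, z n⟫ with hd
  have hdt : Tendsto d atTop (𝓝 ((‖γ‖ ^ 2 : ℝ) : ℂ)) := by
    have h : Tendsto d atTop (𝓝 ⟪α, γ⟫) :=
      ((Continuous.inner continuous_const continuous_id).tendsto γ).comp hzt
    rwa [hαγ] at h
  have hdne : ∀ᶠ n in atTop, d n ≠ 0 := hdt.eventually_ne hγcast
  set x : ℕ → E := fun n => (d n)⁻¹ • z n with hx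
  have hxt : Tendsto x atTop (𝓝 g) := by
    rw [hgdef]; exact Tendsto.smul (hdt.inv₀ hγcast) hzt
  have hset : {t : ℝ≥0∞ | ∃ s ∈ S, ⟪β, s⟫ = 0 ∧ ⟪α, s⟫ = 1 ∧ t = ENNReal.ofReal (‖s‖ ^ 2)}
      = {t : ℝ≥0∞ | ∃ s ∈ {s | s ∈ S ∧ ⟪β, s⟫ = 0 ∧ ⟪α, s⟫ = 1}, t = ENNReal.ofReal (‖s‖ ^ 2)} := by
    ext t
    exact ⟨fun ⟨s, h1, h2, h3, h4⟩ => ⟨s, ⟨h1, h2, h3⟩, h4⟩,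
      fun ⟨s, ⟨h1, h2, h3⟩, h4⟩ => ⟨s, h1, h2, h3, h4⟩⟩
  have hval : ENNReal.ofReal (‖g‖ ^ 2)
      = ENNReal.ofReal (‖β‖ ^ 2 / (‖α‖ ^ 2 * ‖β‖ ^ 2 - ‖⟪α, β⟫‖ ^ 2)) := by
    congr 1
    rw [hgnorm, hnormγ, eq_div_iff hGpos.ne']
    field_simp
  rw [hset, gen_sInf {s | s ∈ S ∧ ⟪β, s⟫ = 0 ∧ ⟪α, s⟫ = 1} g hg0 ?_ x ?_ hxt, hval]
  · rintro s ⟨-, hs0, hs1⟩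
    rw [hgdef, inner_smul_left, hγs, hs0, hs1, mul_zero, sub_zero, mul_one,
      map_inv₀, Complex.conj_ofReal, hgnorm, Complex.ofReal_div]
    simp
  · filter_upwards [hdne] with n hn
    refine ⟨S.smul_mem _ (Submodule.sub_mem _ (hy n) (Submodule.smul_mem _ _ hf)), ?_, ?_⟩
    · show ⟪β, (d n)⁻¹ • z n⟫ = 0
      rw [inner_smul_right, hβz, mul_zero]
    · show ⟪α, (d n)⁻¹ • z n⟫ = 1
      rw [inner_smul_right]
      exact inv_mul_cancel₀ hn



instance (n : ℕ) : BorelSpace (Cn n) := ⟨(PiLp.borelSpace (p := 2) (X := fun _ : Fin n => ℂ)).measurable_eq⟩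

variable {n : ℕ}

/-- The function `u·√w`. -/
def fw (w : Cn n → ℝ) (u : Cn n → ℂ) : Cn n → ℂ := fun z => u z * (Real.sqrt (w z) : ℂ)

lemma fw_add (w : Cn n → ℝ) (u v : Cn n → ℂ) : fw w (u + v) = fw w u + fw w v := by
  funext z; simp [fw]; ring

lemma fw_smul (w : Cn n → ℝ) (c : ℂ) (u : Cn n → ℂ) : fw w (c • u) = c • fw w u := by
  funext z; simp [fw]; ring

lemma wNormSq_eq_sq (Ω : Set (Cn n)) {w : Cn n → ℝ} (hw0 : ∀ z, 0 ≤ w z) (u : Cn n → ℂ) :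
    wNormSq n Ω w u = (eLpNorm (fw w u) 2 (volume.restrict Ω)) ^ 2 := by
  rw [eLpNorm_eq_lintegral_rpow_enorm_toReal two_ne_zero ENNReal.ofNat_ne_top]
  rw [← ENNReal.rpow_natCast _ 2, ← ENNReal.rpow_mul]
  norm_num
  rw [wNormSq]
  congr 1
  funext z
  rw [← ofReal_norm_eq_enorm, ← ENNReal.ofReal_pow (norm_nonneg _)]
  congr 1
  rw [fw]
  simp only [norm_mul, Complex.norm_real, Real.norm_eq_abs,
    _root_.abs_of_nonneg (Real.sqrt_nonneg _)]
  rw [mul_pow, Real.sq_sqrt (hw0 z)]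

lemma memLp_fw {Ω : Set (Cn n)} (hΩo : IsOpen Ω) {w : Cn n → ℝ} (hwm : Measurable w)
    (hw0 : ∀ z, 0 ≤ w z) {u : Cn n → ℂ} (hu : IsCompetitor n Ω w u) :
    MemLp (fw w u) 2 (volume.restrict Ω) := by
  constructor
  · have h1 : AEMeasurable u (volume.restrict Ω) :=
      (hu.1.continuousOn).aemeasurable hΩo.measurableSet
    have h2 : AEMeasurable (fun z => (Real.sqrt (w z) : ℂ)) (volume.restrict Ω) :=
      (Complex.measurable_ofReal.comp (hwm.sqrt)).aemeasurable
    exact (h1.mul h2).aestronglyMeasurable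
  · have h := hu.2
    rw [wNormSq_eq_sq Ω hw0] at h
    rw [lt_top_iff_ne_top] at h ⊢
    intro hcon
    exact h (by rw [hcon]; simp)

lemma isCompetitor_add {Ω : Set (Cn n)} (hΩo : IsOpen Ω) {w : Cn n → ℝ} (hwm : Measurable w)
    (hw0 : ∀ z, 0 ≤ w z) {u v : Cn n → ℂ} (hu : IsCompetitor n Ω w u)
    (hv : IsCompetitor n Ω w v) : IsCompetitor n Ω w (u + v) := by
  refine ⟨hu.1.add hv.1, ?_⟩
  rw [wNormSq_eq_sq Ω hw0, fw_add]
  exact ENNReal.pow_lt_top ((memLp_fw hΩo hwm hw0 hu).add (memLp_fw hΩo hwm hw0 hv)).2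

lemma isCompetitor_smul {Ω : Set (Cn n)} (hΩo : IsOpen Ω) {w : Cn n → ℝ} (hwm : Measurable w)
    (hw0 : ∀ z, 0 ≤ w z) (c : ℂ) {u : Cn n → ℂ} (hu : IsCompetitor n Ω w u) :
    IsCompetitor n Ω w (c • u) := by
  refine ⟨hu.1.const_smul c, ?_⟩
  rw [wNormSq_eq_sq Ω hw0, fw_smul]
  exact ENNReal.pow_lt_top ((memLp_fw hΩo hwm hw0 hu).const_smul c).2

lemma isCompetitor_zero (Ω : Set (Cn n)) (w : Cn n → ℝ) : IsCompetitor n Ω w 0 := by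
  refine ⟨differentiableOn_const 0, ?_⟩
  have : wNormSq n Ω w 0 = 0 := by
    rw [wNormSq]
    rw [← lintegral_zero (μ := (volume.restrict Ω : Measure (Cn n)))]
    congr 1
    funext z
    simp
  rw [this]
  exact ENNReal.zero_lt_top

/-- The submodule of competitors vanishing at `p`. -/
def M (Ω : Set (Cn n)) (hΩo : IsOpen Ω) {w : Cn n → ℝ} (hwm : Measurable w)
    (hw0 : ∀ z, 0 ≤ w z) (p : Cn n) : Submodule ℂ (Cn n → ℂ) where
  carrier := {u | IsCompetitor n Ω w u ∧ u p = 0}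
  add_mem' := fun hu hv => ⟨isCompetitor_add hΩo hwm hw0 hu.1 hv.1, by
    simp [hu.2, hv.2]⟩
  zero_mem' := ⟨isCompetitor_zero Ω w, rfl⟩
  smul_mem' := fun c u hu => ⟨isCompetitor_smul hΩo hwm hw0 c hu.1, by
    simp [hu.2]⟩

/-- The isometric-type map to `L²`. -/
def Tl (Ω : Set (Cn n)) (hΩo : IsOpen Ω) {w : Cn n → ℝ} (hwm : Measurable w)
    (hw0 : ∀ z, 0 ≤ w z) (p : Cn n) :
    M Ω hΩo hwm hw0 p →ₗ[ℂ] Lp ℂ 2 (volume.restrict Ω) where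
  toFun u := (memLp_fw hΩo hwm hw0 u.2.1).toLp (fw w u.1)
  map_add' u v := by
    rw [← MemLp.toLp_add]
    exact MemLp.toLp_congr _ _ (by rw [Submodule.coe_add, fw_add])
  map_smul' c u := by
    simp only [RingHom.id_apply]
    rw [← MemLp.toLp_const_smul]
    exact MemLp.toLp_congr _ _ (by rw [Submodule.coe_smul, fw_smul])

lemma norm_Tl (Ω : Set (Cn n)) (hΩo : IsOpen Ω) {w : Cn n → ℝ} (hwm : Measurable w)
    (hw0 : ∀ z, 0 ≤ w z) (p : Cn n) (u : M Ω hΩo hwm hw0 p) :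
    ENNReal.ofReal (‖Tl Ω hΩo hwm hw0 p u‖ ^ 2) = wNormSq n Ω w u.1 := by
  have h1 : ‖Tl Ω hΩo hwm hw0 p u‖ = (eLpNorm (fw w u.1) 2 (volume.restrict Ω)).toReal :=
    Lp.norm_toLp (fw w u.1) (memLp_fw hΩo hwm hw0 u.2.1)
  have hfin : eLpNorm (fw w u.1) 2 (volume.restrict Ω) ≠ ⊤ :=
    (memLp_fw hΩo hwm hw0 u.2.1).2.ne
  rw [h1, wNormSq_eq_sq Ω hw0, ENNReal.ofReal_pow ENNReal.toReal_nonneg,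
    ENNReal.ofReal_toReal hfin]

/-- The derivative functional `u ↦ ∂_X u(p)` on `M`. -/
def aL (Ω : Set (Cn n)) (hΩo : IsOpen Ω) {w : Cn n → ℝ} (hwm : Measurable w)
    (hw0 : ∀ z, 0 ≤ w z) {p : Cn n} (hp : p ∈ Ω) (X : Cn n) :
    M Ω hΩo hwm hw0 p →ₗ[ℂ] ℂ where
  toFun u := fderiv ℂ u.1 p X
  map_add' u v := by
    have hu : DifferentiableAt ℂ u.1 p := u.2.1.1.differentiableAt (hΩo.mem_nhds hp)
    have hv : DifferentiableAt ℂ v.1 p := v.2.1.1.differentiableAt (hΩo.mem_nhds hp)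
    show fderiv ℂ ((u : Cn n → ℂ) + (v : Cn n → ℂ)) p X
      = fderiv ℂ u.1 p X + fderiv ℂ v.1 p X
    rw [fderiv_add hu hv]
    simp
  map_smul' c u := by
    have hu : DifferentiableAt ℂ u.1 p := u.2.1.1.differentiableAt (hΩo.mem_nhds hp)
    show fderiv ℂ (c • (u : Cn n → ℂ)) p X = c * fderiv ℂ u.1 p X
    rw [fderiv_const_smul hu c]
    simp

/-- Cauchy-type bound for the derivative functional. -/
lemma deriv_bound {Ω : Set (Cn n)} (hΩo : IsOpen Ω) {w : Cn n → ℝ}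
    {p : Cn n} (hp : p ∈ Ω) {r : ℝ} (hr : 0 < r) (hsub : Metric.closedBall p r ⊆ Ω)
    {CA : ℝ} (hCA : 0 < CA)
    (hbound : ∀ u, IsCompetitor n Ω w u → ∀ z ∈ Metric.closedBall p r,
      ‖u z‖ ≤ CA * Real.sqrt ((wNormSq n Ω w u).toReal))
    {X : Cn n} (hX : X ≠ 0) {u : Cn n → ℂ} (hu : IsCompetitor n Ω w u) :
    ‖fderiv ℂ u p X‖ ≤ (CA * ‖X‖ / r) * Real.sqrt ((wNormSq n Ω w u).toReal) := by
  have hXn : (0:ℝ) < ‖X‖ := norm_pos_iff.2 hX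
  set ρ : ℝ := r / ‖X‖ with hρdef
  have hρ : 0 < ρ := div_pos hr hXn
  set ℓ : ℂ → Cn n := fun ζ => p + ζ • X with hℓdef
  have hmap : ∀ ζ : ℂ, ‖ζ‖ ≤ ρ → ℓ ζ ∈ Metric.closedBall p r := by
    intro ζ hζ
    rw [Metric.mem_closedBall, hℓdef]
    simp only
    rw [dist_eq_norm, add_sub_cancel_left, norm_smul]
    calc ‖ζ‖ * ‖X‖ ≤ ρ * ‖X‖ := by gcongr
      _ = r := by rw [hρdef]; field_simp
  have hℓd : Differentiable ℂ ℓ := by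
    have : Differentiable ℂ fun ζ : ℂ => ζ • X := (differentiable_id).smul_const X
    exact this.const_add p
  have hgd : DifferentiableOn ℂ (u ∘ ℓ) (closure (Metric.ball (0:ℂ) ρ)) := by
    rw [closure_ball (0:ℂ) hρ.ne']
    refine DifferentiableOn.comp hu.1 hℓd.differentiableOn ?_
    intro ζ hζ
    rw [Metric.mem_closedBall, dist_zero_right] at hζ
    exact hsub (hmap ζ hζ)
  have hsph : ∀ ζ ∈ Metric.sphere (0:ℂ) ρ,
      ‖(u ∘ ℓ) ζ‖ ≤ CA * Real.sqrt ((wNormSq n Ω w u).toReal) := by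
    intro ζ hζ
    rw [mem_sphere_zero_iff_norm] at hζ
    exact hbound u hu (ℓ ζ) (hmap ζ hζ.le)
  have hder := Complex.norm_deriv_le_of_forall_mem_sphere_norm_le hρ
    hgd.diffContOnCl hsph
  have hline : HasDerivAt ℓ X 0 := by
    have h1 : HasDerivAt (fun ζ : ℂ => ζ • X) ((1:ℂ) • X) 0 :=
      (hasDerivAt_id (0:ℂ)).smul_const X
    rw [one_smul] at h1
    exact h1.const_add p
  have hufd : HasFDerivAt u (fderiv ℂ u p) (ℓ 0) := by
    rw [hℓdef]
    simp only [zero_smul, add_zero]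
    exact (hu.1.differentiableAt (hΩo.mem_nhds hp)).hasFDerivAt
  have hg0 : HasDerivAt (u ∘ ℓ) (fderiv ℂ u p X) 0 := hufd.comp_hasDerivAt 0 hline
  rw [hg0.deriv] at hder
  calc ‖fderiv ℂ u p X‖ ≤ CA * Real.sqrt ((wNormSq n Ω w u).toReal) / ρ := hder
    _ = (CA * ‖X‖ / r) * Real.sqrt ((wNormSq n Ω w u).toReal) := by
        rw [hρdef]
        field_simp

/-- Existence of an affine competitor with prescribed derivatives. -/
lemma exists_dual {Ω : Set (Cn n)} (hbd : Bornology.IsBounded Ω) {w : Cn n → ℝ}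
    (hwm : Measurable w) (hw0 : ∀ z, 0 ≤ w z)
    (hwint : (∫⁻ z in Ω, ENNReal.ofReal (w z)) < ⊤) (p : Cn n)
    {X Y : Cn n} (hY0 : Y ≠ 0) (hne : ∀ a : ℂ, a • Y ≠ X) :
    ∃ u : Cn n → ℂ, IsCompetitor n Ω w u ∧ u p = 0 ∧
      fderiv ℂ u p X = 1 ∧ fderiv ℂ u p Y = 0 := by
  have hY2 : (0:ℝ) < ‖Y‖ ^ 2 := by have := norm_pos_iff.2 hY0; positivity
  have hYcast : ((‖Y‖ ^ 2 : ℝ) : ℂ) ≠ 0 := by exact_mod_cast hY2.ne'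
  set c : ℂ := ⟪Y, X⟫ / ((‖Y‖ ^ 2 : ℝ) : ℂ) with hcdef
  set X' : Cn n := X - c • Y with hX'def
  have hX'0 : X' ≠ 0 := by
    intro h
    apply hne c
    rw [hX'def, sub_eq_zero] at h
    exact h.symm
  have hX'2 : (0:ℝ) < ‖X'‖ ^ 2 := by have := norm_pos_iff.2 hX'0; positivity
  have hX'cast : ((‖X'‖ ^ 2 : ℝ) : ℂ) ≠ 0 := by exact_mod_cast hX'2.ne'
  have hX'Y : ⟪X', Y⟫ = 0 := by
    rw [hX'def, inner_sub_left, inner_smul_left, inner_self_c, hcdef, map_div₀,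
      Complex.conj_ofReal, inner_conj_symm, div_mul_cancel₀ _ hYcast, sub_self]
  have hX'X : ⟪X', X⟫ = ((‖X'‖ ^ 2 : ℝ) : ℂ) := by
    have hXd : X = X' + c • Y := by rw [hX'def]; abel
    calc ⟪X', X⟫ = ⟪X', X'⟫ + c * ⟪X', Y⟫ := by
          conv_lhs => rw [hXd, inner_add_right, inner_smul_right]
      _ = ((‖X'‖ ^ 2 : ℝ) : ℂ) := by rw [hX'Y, mul_zero, add_zero, inner_self_c]
  -- the affine function
  set u : Cn n → ℂ := fun z => ((‖X'‖ ^ 2 : ℝ) : ℂ)⁻¹ * (innerSL ℂ X' (z - p)) with hudef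
  have hudiff : Differentiable ℂ u :=
    (((innerSL ℂ X').differentiable).comp (differentiable_id.sub_const p)).const_mul _
  have hup : u p = 0 := by rw [hudef]; simp
  have hfd : HasFDerivAt u (((‖X'‖ ^ 2 : ℝ) : ℂ)⁻¹ • (innerSL ℂ X' : Cn n →L[ℂ] ℂ)) p := by
    have h1 : HasFDerivAt (fun z : Cn n => innerSL ℂ X' (z - p)) (innerSL ℂ X' : Cn n →L[ℂ] ℂ) p := by
      have h2 : HasFDerivAt (innerSL ℂ X') (innerSL ℂ X' : Cn n →L[ℂ] ℂ) (p - p) :=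
        (innerSL ℂ X').hasFDerivAt
      have h3 : HasFDerivAt (fun z : Cn n => z - p) (ContinuousLinearMap.id ℂ (Cn n)) p :=
        (hasFDerivAt_id p).sub_const p
      have h4 := HasFDerivAt.comp (f := fun z : Cn n => z - p) p h2 h3
      exact h4
    exact h1.const_mul _
  have hfderiv : fderiv ℂ u p = ((‖X'‖ ^ 2 : ℝ) : ℂ)⁻¹ • (innerSL ℂ X' : Cn n →L[ℂ] ℂ) :=
    hfd.fderiv
  -- bounded on Ω
  obtain ⟨R, hR⟩ := hbd.subset_closedBall 0
  set Mb : ℝ := ‖((‖X'‖ ^ 2 : ℝ) : ℂ)⁻¹‖ * (‖X'‖ * (|R| + ‖p‖)) with hMbdef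
  have hub : ∀ z ∈ Ω, ‖u z‖ ≤ Mb := by
    intro z hz
    rw [hudef]
    simp only
    rw [norm_mul]
    refine mul_le_mul_of_nonneg_left ?_ (norm_nonneg _)
    calc ‖innerSL ℂ X' (z - p)‖ ≤ ‖X'‖ * ‖z - p‖ := norm_inner_le_norm X' (z - p)
      _ ≤ ‖X'‖ * (|R| + ‖p‖) := by
          gcongr
          calc ‖z - p‖ ≤ ‖z‖ + ‖p‖ := norm_sub_le z p
            _ ≤ |R| + ‖p‖ := by
                have h5 := hR hz
                rw [Metric.mem_closedBall, dist_zero_right] at h5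
                have : R ≤ |R| := le_abs_self R
                gcongr
                linarith
  have hMb0 : 0 ≤ Mb := by
    rw [hMbdef]
    positivity
  have hfin : wNormSq n Ω w u < ⊤ := by
    have h1 : wNormSq n Ω w u ≤ ∫⁻ z in Ω, ENNReal.ofReal (Mb ^ 2 * w z) := by
      rw [wNormSq]
      refine setLIntegral_mono (measurable_const.mul hwm).ennreal_ofReal ?_
      intro z hz
      refine ENNReal.ofReal_le_ofReal ?_
      have := hub z hz
      have h2 : ‖u z‖ ^ 2 ≤ Mb ^ 2 := by nlinarith [norm_nonneg (u z)]
      nlinarith [hw0 z]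
    have h2 : (∫⁻ z in Ω, ENNReal.ofReal (Mb ^ 2 * w z))
        = ENNReal.ofReal (Mb ^ 2) * ∫⁻ z in Ω, ENNReal.ofReal (w z) := by
      rw [show (fun z => ENNReal.ofReal (Mb ^ 2 * w z))
          = fun z => ENNReal.ofReal (Mb ^ 2) * ENNReal.ofReal (w z) from
          funext fun z => by rw [← ENNReal.ofReal_mul (by positivity)]]
      exact lintegral_const_mul _ hwm.ennreal_ofReal
    refine lt_of_le_of_lt h1 ?_
    rw [h2]
    exact ENNReal.mul_lt_top ENNReal.ofReal_lt_top hwint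
  refine ⟨u, ⟨hudiff.differentiableOn, hfin⟩, hup, ?_, ?_⟩
  · rw [hfderiv]
    simp only [ContinuousLinearMap.coe_smul', Pi.smul_apply, innerSL_apply_apply, smul_eq_mul]
    rw [hX'X]
    exact inv_mul_cancel₀ hX'cast
  · rw [hfderiv]
    simp only [ContinuousLinearMap.coe_smul', Pi.smul_apply, innerSL_apply_apply, smul_eq_mul]
    rw [hX'Y, mul_zero]



lemma exists_riesz {E V : Type*} [NormedAddCommGroup E] [InnerProductSpace ℂ E]
    [CompleteSpace E] [AddCommGroup V] [Module ℂ V]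
    (T : V →ₗ[ℂ] E) (a : V →ₗ[ℂ] ℂ) {C : ℝ} (hb : ∀ v, ‖a v‖ ≤ C * ‖T v‖) :
    ∃ α : E, α ∈ (LinearMap.range T).topologicalClosure ∧
      ∀ v : V, ⟪α, T v⟫ = a v := by
  have hker : LinearMap.ker T ≤ LinearMap.ker a := by
    intro v hv
    rw [LinearMap.mem_ker] at hv ⊢
    have := hb v
    rw [hv, norm_zero, mul_zero] at this
    simpa using le_antisymm this (norm_nonneg _)
  set φ₀ : ↥(LinearMap.range T) →ₗ[ℂ] ℂ :=
    (Submodule.liftQ (LinearMap.ker T) a hker).comp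
      ((T.quotKerEquivRange).symm : ↥(LinearMap.range T) →ₗ[ℂ] _) with hφ₀def
  have hφ₀ : ∀ v : V, ∀ h : T v ∈ LinearMap.range T, φ₀ ⟨T v, h⟩ = a v := by
    intro v h
    have h1 : (T.quotKerEquivRange).symm ⟨T v, h⟩
        = Submodule.Quotient.mk v := by
      rw [LinearEquiv.symm_apply_eq]
      exact Subtype.ext (T.quotKerEquivRange_apply_mk v)
    rw [hφ₀def]
    simp only [LinearMap.coe_comp, LinearEquiv.coe_coe, Function.comp_apply, h1,
      Submodule.liftQ_apply]
  have hφb : ∀ s : ↥(LinearMap.range T), ‖φ₀ s‖ ≤ C * ‖s‖ := by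
    rintro ⟨s, hs⟩
    obtain ⟨v, rfl⟩ := hs
    rw [hφ₀ v (LinearMap.mem_range_self T v)]
    exact hb v
  set φ : ↥(LinearMap.range T) →L[ℂ] ℂ := LinearMap.mkContinuous φ₀ C hφb with hφdef
  obtain ⟨g, hg, -⟩ := exists_extension_norm_eq (LinearMap.range T) φ
  set A : E := (InnerProductSpace.toDual ℂ E).symm g with hAdef
  have hA : ∀ x : E, ⟪A, x⟫ = g x := fun x => InnerProductSpace.toDual_symm_apply
  set K : Submodule ℂ E := (LinearMap.range T).topologicalClosure with hKdef
  haveI : CompleteSpace ↥K := (Submodule.isClosed_topologicalClosure _).completeSpace_coe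
  refine ⟨(K.orthogonalProjection A : E), SetLike.coe_mem _, ?_⟩
  intro v
  have hTvK : T v ∈ K :=
    Submodule.le_topologicalClosure _ (LinearMap.mem_range_self T v)
  have horth : A - (K.orthogonalProjection A : E) ∈ Kᗮ :=
    K.sub_starProjection_mem_orthogonal A
  have h0 : ⟪A - (K.orthogonalProjection A : E), T v⟫ = 0 := by
    have h1 : ⟪T v, A - (K.orthogonalProjection A : E)⟫ = 0 :=
      (Submodule.mem_orthogonal K _).1 horth (T v) hTvK
    rw [← inner_conj_symm, h1, map_zero]
  have h2 : ⟪(K.orthogonalProjection A : E), T v⟫ = ⟪A, T v⟫ := by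
    have := inner_sub_left (𝕜 := ℂ) A ((K.orthogonalProjection A : E)) (T v)
    rw [h0] at this
    exact (sub_eq_zero.mp this.symm).symm
  rw [h2, hA]
  have h3 : g (T v) = φ ⟨T v, LinearMap.mem_range_self T v⟩ :=
    hg ⟨T v, LinearMap.mem_range_self T v⟩
  rw [h3, hφdef]
  rw [LinearMap.mkContinuous_apply]
  exact hφ₀ v _


lemma mem_M_iff {Ω : Set (Cn n)} (hΩo : IsOpen Ω) {w : Cn n → ℝ} (hwm : Measurable w)
    (hw0 : ∀ z, 0 ≤ w z) (p : Cn n) (u : Cn n → ℂ) :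
    u ∈ M Ω hΩo hwm hw0 p ↔ IsCompetitor n Ω w u ∧ u p = 0 := Iff.rfl

lemma aL_apply (Ω : Set (Cn n)) (hΩo : IsOpen Ω) {w : Cn n → ℝ} (hwm : Measurable w)
    (hw0 : ∀ z, 0 ≤ w z) {p : Cn n} (hp : p ∈ Ω) (X : Cn n) (u : M Ω hΩo hwm hw0 p) :
    aL Ω hΩo hwm hw0 hp X u = fderiv ℂ u.1 p X := rfl

end
end I1aux

/-- Symmetry of the conditioned first minimum integrals (part of Theorem 4.5). -/
theorem I1cond_symmetry {n : ℕ} (hn : 1 ≤ n)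
    (Ω : Set (Cn n)) (hΩo : IsOpen Ω) (hne : Ω.Nonempty) (hbd : Bornology.IsBounded Ω)
    (w : Cn n → ℝ) (hwm : Measurable w) (hw0 : ∀ z, 0 ≤ w z)
    (hadm : Admissible n Ω w)
    (hwint : (∫⁻ z in Ω, ENNReal.ofReal (w z)) < ⊤)
    (p : Cn n) (hp : p ∈ Ω) (X Y : Cn n) (hXY : LinearIndependent ℂ ![X, Y]) :
    0 < I1 n Ω w p X ∧ I1 n Ω w p X < ⊤ ∧
    0 < I1 n Ω w p Y ∧ I1 n Ω w p Y < ⊤ ∧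
    0 < I1cond n Ω w p X Y ∧ I1cond n Ω w p X Y < ⊤ ∧
    0 < I1cond n Ω w p Y X ∧ I1cond n Ω w p Y X < ⊤ ∧
    I1 n Ω w p X * I1cond n Ω w p Y X = I1 n Ω w p Y * I1cond n Ω w p X Y := by
  classical
  -- independence facts
  rw [linearIndependent_fin2] at hXY
  have hY0 : Y ≠ 0 := by simpa using hXY.1
  have hneYX : ∀ a : ℂ, a • Y ≠ X := by
    intro a
    have := hXY.2 a
    simpa using this
  have hX0 : X ≠ 0 := by
    intro h
    exact hneYX 0 (by simp [h])
  have hneXY : ∀ a : ℂ, a • X ≠ Y := by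
    intro a ha
    rcases eq_or_ne a 0 with h0 | h0
    · rw [h0, zero_smul] at ha
      exact hY0 ha.symm
    · exact hneYX a⁻¹ (by rw [← ha, smul_smul, inv_mul_cancel₀ h0, one_smul])
  -- admissibility bound on a small closed ball around p
  obtain ⟨ε, hε, hball⟩ := Metric.isOpen_iff.1 hΩo p hp
  have hr : (0:ℝ) < ε / 2 := by positivity
  have hsub : Metric.closedBall p (ε / 2) ⊆ Ω :=
    (Metric.closedBall_subset_ball (by linarith)).trans hball
  obtain ⟨CA, hCA0, hCAb⟩ := hadm (Metric.closedBall p (ε / 2))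
    (isCompact_closedBall p (ε / 2)) hsub
  -- the Hilbert space setup
  set V := I1aux.M Ω hΩo hwm hw0 p with hVdef
  set T := I1aux.Tl Ω hΩo hwm hw0 p with hTdef
  have hsq : ∀ u : V, Real.sqrt ((wNormSq n Ω w u.1).toReal) = ‖T u‖ := by
    intro u
    have h := I1aux.norm_Tl Ω hΩo hwm hw0 p u
    have h2 : (wNormSq n Ω w u.1).toReal = ‖T u‖ ^ 2 := by
      rw [← h, ENNReal.toReal_ofReal (by positivity)]
    rw [h2, Real.sqrt_sq (norm_nonneg _)]
  have hbX : ∀ u : V, ‖I1aux.aL Ω hΩo hwm hw0 hp X u‖ ≤ (CA * ‖X‖ / (ε / 2)) * ‖T u‖ := by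
    intro u
    rw [I1aux.aL_apply]
    have h := I1aux.deriv_bound hΩo hp hr hsub hCA0 hCAb hX0 u.2.1
    rwa [hsq u] at h
  have hbY : ∀ u : V, ‖I1aux.aL Ω hΩo hwm hw0 hp Y u‖ ≤ (CA * ‖Y‖ / (ε / 2)) * ‖T u‖ := by
    intro u
    rw [I1aux.aL_apply]
    have h := I1aux.deriv_bound hΩo hp hr hsub hCA0 hCAb hY0 u.2.1
    rwa [hsq u] at h
  obtain ⟨α, hαmem, hαrep⟩ := I1aux.exists_riesz T (I1aux.aL Ω hΩo hwm hw0 hp X) hbX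
  obtain ⟨β, hβmem, hβrep⟩ := I1aux.exists_riesz T (I1aux.aL Ω hΩo hwm hw0 hp Y) hbY
  have hαrep' : ∀ u : V, (inner ℂ α (T u) : ℂ) = fderiv ℂ u.1 p X := by
    intro u; rw [hαrep, I1aux.aL_apply]
  have hβrep' : ∀ u : V, (inner ℂ β (T u) : ℂ) = fderiv ℂ u.1 p Y := by
    intro u; rw [hβrep, I1aux.aL_apply]
  -- dual competitors
  obtain ⟨ue, hue_comp, hue_p, hue_X, hue_Y⟩ :=
    I1aux.exists_dual hbd hwm hw0 hwint p hY0 hneYX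
  obtain ⟨uf, huf_comp, huf_p, huf_Y, huf_X⟩ :=
    I1aux.exists_dual hbd hwm hw0 hwint p hX0 hneXY
  set me : V := ⟨ue, hue_comp, hue_p⟩ with hmedef
  set mf : V := ⟨uf, huf_comp, huf_p⟩ with hmfdef
  have hαe : (inner ℂ α (T me) : ℂ) = 1 := by rw [hαrep' me]; exact hue_X
  have hβe : (inner ℂ β (T me) : ℂ) = 0 := by rw [hβrep' me]; exact hue_Y
  have hαf : (inner ℂ α (T mf) : ℂ) = 0 := by rw [hαrep' mf]; exact huf_X
  have hβf : (inner ℂ β (T mf) : ℂ) = 1 := by rw [hβrep' mf]; exact huf_Y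
  have hTeS : T me ∈ LinearMap.range T := LinearMap.mem_range_self T me
  have hTfS : T mf ∈ LinearMap.range T := LinearMap.mem_range_self T mf
  -- set translations
  have hset1 : ∀ (δ : Lp ℂ 2 (volume.restrict Ω)) (Z : Cn n),
      (∀ u : V, (inner ℂ δ (T u) : ℂ) = fderiv ℂ u.1 p Z) →
      {t : ℝ≥0∞ | ∃ u, IsCompetitor n Ω w u ∧ u p = 0 ∧ fderiv ℂ u p Z = 1 ∧
        t = wNormSq n Ω w u}
      = {t : ℝ≥0∞ | ∃ s ∈ LinearMap.range T, (inner ℂ δ s : ℂ) = 1 ∧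
        t = ENNReal.ofReal (‖s‖ ^ 2)} := by
    intro δ Z hrep
    ext t
    constructor
    · rintro ⟨u, hcomp, hp0, hder, rfl⟩
      refine ⟨T ⟨u, hcomp, hp0⟩, LinearMap.mem_range_self T _, ?_, ?_⟩
      · rw [hrep ⟨u, hcomp, hp0⟩]; exact hder
      · exact (I1aux.norm_Tl Ω hΩo hwm hw0 p ⟨u, hcomp, hp0⟩).symm
    · rintro ⟨s, ⟨m, rfl⟩, h1, rfl⟩
      obtain ⟨hcomp, hp0⟩ := (I1aux.mem_M_iff hΩo hwm hw0 p m.1).1 m.2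
      exact ⟨m.1, hcomp, hp0, by rw [← hrep m]; exact h1,
        (I1aux.norm_Tl Ω hΩo hwm hw0 p m)⟩
  have hset2 : ∀ (δ η : Lp ℂ 2 (volume.restrict Ω)) (Z W : Cn n),
      (∀ u : V, (inner ℂ δ (T u) : ℂ) = fderiv ℂ u.1 p Z) →
      (∀ u : V, (inner ℂ η (T u) : ℂ) = fderiv ℂ u.1 p W) →
      {t : ℝ≥0∞ | ∃ u, IsCompetitor n Ω w u ∧ u p = 0 ∧ fderiv ℂ u p W = 0 ∧
        fderiv ℂ u p Z = 1 ∧ t = wNormSq n Ω w u}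
      = {t : ℝ≥0∞ | ∃ s ∈ LinearMap.range T, (inner ℂ η s : ℂ) = 0 ∧ (inner ℂ δ s : ℂ) = 1 ∧
        t = ENNReal.ofReal (‖s‖ ^ 2)} := by
    intro δ η Z W hrepδ hrepη
    ext t
    constructor
    · rintro ⟨u, hcomp, hp0, hder0, hder1, rfl⟩
      refine ⟨T ⟨u, hcomp, hp0⟩, LinearMap.mem_range_self T _, ?_, ?_, ?_⟩
      · rw [hrepη ⟨u, hcomp, hp0⟩]; exact hder0
      · rw [hrepδ ⟨u, hcomp, hp0⟩]; exact hder1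
      · exact (I1aux.norm_Tl Ω hΩo hwm hw0 p ⟨u, hcomp, hp0⟩).symm
    · rintro ⟨s, ⟨m, rfl⟩, h0, h1, rfl⟩
      obtain ⟨hcomp, hp0⟩ := (I1aux.mem_M_iff hΩo hwm hw0 p m.1).1 m.2
      exact ⟨m.1, hcomp, hp0, by rw [← hrepη m]; exact h0, by rw [← hrepδ m]; exact h1,
        (I1aux.norm_Tl Ω hΩo hwm hw0 p m)⟩
  -- the four values
  have hI1X : I1 n Ω w p X = ENNReal.ofReal (1 / ‖α‖ ^ 2) := by
    rw [I1, hset1 α X hαrep']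
    exact I1aux.hilb1 (LinearMap.range T) hαmem hTeS hαe
  have hI1Y : I1 n Ω w p Y = ENNReal.ofReal (1 / ‖β‖ ^ 2) := by
    rw [I1, hset1 β Y hβrep']
    exact I1aux.hilb1 (LinearMap.range T) hβmem hTfS hβf
  obtain ⟨hG1, hCXY⟩ := I1aux.hilb2 (LinearMap.range T) hαmem hβmem hTeS hTfS hαe hβe hαf hβf
  obtain ⟨hG2, hCYX⟩ := I1aux.hilb2 (LinearMap.range T) hβmem hαmem hTfS hTeS hβf hαf hβe hαe
  have hI1cXY : I1cond n Ω w p X Y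
      = ENNReal.ofReal (‖β‖ ^ 2 / (‖α‖ ^ 2 * ‖β‖ ^ 2 - ‖(inner ℂ α β : ℂ)‖ ^ 2)) := by
    rw [I1cond, hset2 α β X Y hαrep' hβrep']
    exact hCXY
  have hI1cYX : I1cond n Ω w p Y X
      = ENNReal.ofReal (‖α‖ ^ 2 / (‖β‖ ^ 2 * ‖α‖ ^ 2 - ‖(inner ℂ β α : ℂ)‖ ^ 2)) := by
    rw [I1cond, hset2 β α Y X hβrep' hαrep']
    exact hCYX
  -- basic positivity
  have hα0 : α ≠ 0 := by
    intro h
    rw [h, inner_zero_left] at hαe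
    exact one_ne_zero hαe.symm
  have hβ0 : β ≠ 0 := by
    intro h
    rw [h, inner_zero_left] at hβf
    exact one_ne_zero hβf.symm
  have ha2 : (0:ℝ) < ‖α‖ ^ 2 := by have := norm_pos_iff.2 hα0; positivity
  have hb2 : (0:ℝ) < ‖β‖ ^ 2 := by have := norm_pos_iff.2 hβ0; positivity
  have hGG : ‖β‖ ^ 2 * ‖α‖ ^ 2 - ‖(inner ℂ β α : ℂ)‖ ^ 2
      = ‖α‖ ^ 2 * ‖β‖ ^ 2 - ‖(inner ℂ α β : ℂ)‖ ^ 2 := by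
    rw [norm_inner_symm]
    ring
  rw [hGG] at hI1cYX hG2
  refine ⟨?_, ?_, ?_, ?_, ?_, ?_, ?_, ?_, ?_⟩
  · rw [hI1X]; exact ENNReal.ofReal_pos.2 (by positivity)
  · rw [hI1X]; exact ENNReal.ofReal_lt_top
  · rw [hI1Y]; exact ENNReal.ofReal_pos.2 (by positivity)
  · rw [hI1Y]; exact ENNReal.ofReal_lt_top
  · rw [hI1cXY]; exact ENNReal.ofReal_pos.2 (by positivity)
  · rw [hI1cXY]; exact ENNReal.ofReal_lt_top
  · rw [hI1cYX]; exact ENNReal.ofReal_pos.2 (by positivity)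
  · rw [hI1cYX]; exact ENNReal.ofReal_lt_top
  · rw [hI1X, hI1Y, hI1cXY, hI1cYX,
      ← ENNReal.ofReal_mul (by positivity), ← ENNReal.ofReal_mul (by positivity)]
    congr 1
    field_simp
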